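/- arXiv:2207.02029 — 3 statements merged into one kernel-verified Lean document; each statement's English description precedes it below -/
import Mathlib

section
/- If g : ℝⁿ → ℝ^{n×n} is a Lipschitz continuous map into symmetric positive-definite matrices on the closed upper half space {x_n ≥ 0} satisfying g_{jn}(x',0) = δ_{jn} for all boundary points (x',0), then the reflected matrix field g̃ defined by g̃_{ij}(x',x_n) = g_{ij}(x',|x_n|) when (i≠n and j≠n) or i=j=n, and g̃_{ij}(x',x_n) = sgn(x_n)·g_{ij}(x',|x_n|) otherwise, is Lipschitz continuous on all of ℝⁿ. -/
/-!
Folding `ℝⁿ` onto the upper half space by `x ↦ (x', |xₙ|)` is `1`-Lipschitz, so every entry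
`g_{ij}(x', |xₙ|)` is Lipschitz on all of `ℝⁿ`; this settles the entries that are not multiplied
by `sgn xₙ`. The remaining entries `g_{in}`, `g_{ni}` (`i ≠ n`) vanish on the boundary, by the
boundary condition and symmetry, so they are bounded by `K |xₙ|`. For two points on opposite
sides of the boundary this gives `|g̃(x) - g̃(y)| ≤ K (|xₙ| + |yₙ|) = K |xₙ - yₙ|`, and the sign
flip costs nothing.
-/

/-- `sgn z = +1` for `z ≥ 0` and `−1` for `z < 0`. -/
noncomputable def sgn (z : ℝ) : ℝ := if z < 0 then -1 else 1

open Function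

section Fold

variable {ι : Type*} [Fintype ι] [DecidableEq ι] {K : NNReal}

theorem lipschitzWith_update_abs (l : ι) :
    LipschitzWith 1 (fun x : ι → ℝ => update x l |x l|) := by
  refine LipschitzWith.of_dist_le_mul fun x y => ?_
  rw [NNReal.coe_one, one_mul]
  refine (dist_pi_le_iff dist_nonneg).2 fun k => ?_
  by_cases hk : k = l
  · subst hk
    calc dist (update x k |x k| k) (update y k |y k| k) = dist |x k| |y k| := by
          simp only [update_self]
      _ ≤ dist (x k) (y k) := by
          simpa only [Real.dist_eq] using abs_abs_sub_abs_le_abs_sub (x k) (y k)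
      _ ≤ dist x y := dist_le_pi_dist x y k
  · simpa only [update_of_ne hk] using dist_le_pi_dist x y k

theorem LipschitzOnWith.comp_update_abs {f : (ι → ℝ) → ℝ} {l : ι}
    (hf : LipschitzOnWith K f {x | 0 ≤ x l}) :
    LipschitzWith K (fun x => f (update x l |x l|)) := by
  have hmaps : Set.MapsTo (fun x : ι → ℝ => update x l |x l|) Set.univ {x | 0 ≤ x l} :=
    fun x _ => by simp
  exact lipschitzOnWith_univ.mp <| by
    simpa only [mul_one, comp_def] using hf.comp (lipschitzWith_update_abs l).lipschitzOnWith hmaps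

theorem LipschitzOnWith.abs_le_of_eq_zero {f : (ι → ℝ) → ℝ} {l : ι}
    (hf : LipschitzOnWith K f {x | 0 ≤ x l}) (hzero : ∀ x, x l = 0 → f x = 0) (x : ι → ℝ) :
    |f (update x l |x l|)| ≤ K * |x l| := by
  have hdist : dist (update x l |x l|) (update x l 0) ≤ |x l| := by
    refine (dist_pi_le_iff (abs_nonneg _)).2 fun k => ?_
    by_cases hk : k = l
    · subst hk; simp
    · simp [update_of_ne hk]
  calc |f (update x l |x l|)|
      = dist (f (update x l |x l|)) (f (update x l 0)) := by
        rw [hzero _ (update_self _ _ _), Real.dist_eq, sub_zero]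
    _ ≤ K * dist (update x l |x l|) (update x l 0) :=
        hf.dist_le_mul _ (by simp) _ (by simp)
    _ ≤ K * |x l| := by gcongr

end Fold

theorem LipschitzWith.sgn_mul {X : Type*} [PseudoMetricSpace X] {K : NNReal} {s h : X → ℝ}
    (hs : LipschitzWith 1 s) (hh : LipschitzWith K h) (hbound : ∀ x, |h x| ≤ K * |s x|) :
    LipschitzWith K (fun x => sgn (s x) * h x) := by
  refine LipschitzWith.of_dist_le_mul fun x y => ?_
  have hsame (heq : sgn (s x) = sgn (s y)) :
      dist (sgn (s x) * h x) (sgn (s y) * h y) ≤ K * dist x y := by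
    have : |sgn (s x)| = 1 := by unfold sgn; split_ifs <;> simp
    rw [heq, Real.dist_eq, ← mul_sub, abs_mul, ← heq, this, one_mul, ← Real.dist_eq]
    exact hh.dist_le_mul x y
  have hopp : ∀ a b, s a < 0 → 0 ≤ s b → |h a| + |h b| ≤ K * dist a b := fun a b ha hb =>
    calc |h a| + |h b| ≤ K * (|s a| + |s b|) := by linarith [hbound a, hbound b]
      _ = K * dist (s a) (s b) := by
        rw [Real.dist_eq, abs_of_neg ha, abs_of_nonneg hb, abs_of_nonpos (by linarith)]; ring
      _ ≤ K * dist a b := by gcongr; simpa using hs.dist_le_mul a b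
  rcases lt_or_ge (s x) 0 with hx | hx <;> rcases lt_or_ge (s y) 0 with hy | hy
  · exact hsame (by simp [sgn, hx, hy])
  · simp only [sgn, if_pos hx, if_neg hy.not_gt, Real.dist_eq]
    calc |-1 * h x - 1 * h y| = |h x + h y| := by rw [← abs_neg]; ring_nf
      _ ≤ K * dist x y := (abs_add_le _ _).trans (hopp x y hx hy)
  · simp only [sgn, if_neg hx.not_gt, if_pos hy, Real.dist_eq]
    calc |1 * h x - -1 * h y| = |h y + h x| := by ring_nf
      _ ≤ K * dist x y := by
        rw [dist_comm]; exact (abs_add_le _ _).trans (hopp y x hy hx)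
  · exact hsame (by simp [sgn, hx.not_gt, hy.not_gt])

theorem Matrix.IsSymm.apply_eq_zero_of_col_eq_single {ι R : Type*} [DecidableEq ι] [Zero R]
    [One R] {A : Matrix ι ι R} (hA : A.IsSymm) {l : ι}
    (hcol : ∀ j, A j l = if j = l then 1 else 0) {i j : ι} (hij : i ≠ j)
    (hl : i = l ∨ j = l) : A i j = 0 := by
  rcases hl with rfl | rfl
  · rw [hA.apply, hcol, if_neg hij.symm]
  · rw [hcol, if_neg hij]

theorem stmt0_general (n : ℕ) (g : (Fin (n + 1) → ℝ) → Matrix (Fin (n + 1)) (Fin (n + 1)) ℝ)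
    (K : NNReal)
    (hLip : ∀ i j, LipschitzOnWith K (fun x => g x i j)
      {x : Fin (n + 1) → ℝ | 0 ≤ x (Fin.last n)})
    (hsymm : ∀ x : Fin (n + 1) → ℝ, 0 ≤ x (Fin.last n) → (g x).IsSymm)
    (hbdry : ∀ x : Fin (n + 1) → ℝ, x (Fin.last n) = 0 →
      ∀ j, g x j (Fin.last n) = if j = Fin.last n then 1 else 0) :
    ∃ K' : NNReal, ∀ i j, LipschitzWith K'
      (fun x : Fin (n + 1) → ℝ =>
        (if (i ≠ Fin.last n ∧ j ≠ Fin.last n) ∨ (i = Fin.last n ∧ j = Fin.last n)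
          then 1 else sgn (x (Fin.last n))) *
        g (Function.update x (Fin.last n) |x (Fin.last n)|) i j) := by
  refine ⟨K, fun i j => ?_⟩
  by_cases hdiag : (i ≠ Fin.last n ∧ j ≠ Fin.last n) ∨ (i = Fin.last n ∧ j = Fin.last n)
  · simpa only [if_pos hdiag, one_mul] using (hLip i j).comp_update_abs
  · simp only [if_neg hdiag]
    have hzero : ∀ x : Fin (n + 1) → ℝ, x (Fin.last n) = 0 → g x i j = 0 := fun x hx =>
      (hsymm x hx.ge).apply_eq_zero_of_col_eq_single (hbdry x hx) (by grind) (by grind)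
    exact (LipschitzWith.eval (Fin.last n)).sgn_mul (hLip i j).comp_update_abs
      ((hLip i j).abs_le_of_eq_zero hzero)

/-- If `g` is a Lipschitz map on the closed upper half space
`{x | 0 ≤ xₙ}` into symmetric positive-definite matrices with `g_{jn}(x',0) = δ_{jn}`
on the boundary, then the reflected matrix field `g̃` is Lipschitz on all of `ℝⁿ`.
(Lipschitz continuity is stated entrywise, which is equivalent to Lipschitz
continuity with respect to any fixed norm on matrices.) -/
theorem stmt0 (n : ℕ) (g : (Fin (n + 1) → ℝ) → Matrix (Fin (n + 1)) (Fin (n + 1)) ℝ)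
    (K : NNReal)
    (hLip : ∀ i j, LipschitzOnWith K (fun x => g x i j)
      {x : Fin (n + 1) → ℝ | 0 ≤ x (Fin.last n)})
    (hsymm : ∀ x : Fin (n + 1) → ℝ, 0 ≤ x (Fin.last n) → (g x).IsSymm)
    (hpos : ∀ x : Fin (n + 1) → ℝ, 0 ≤ x (Fin.last n) → (g x).PosDef)
    (hbdry : ∀ x : Fin (n + 1) → ℝ, x (Fin.last n) = 0 →
      ∀ j, g x j (Fin.last n) = if j = Fin.last n then 1 else 0) :
    ∃ K' : NNReal, ∀ i j, LipschitzWith K'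
      (fun x : Fin (n + 1) → ℝ =>
        (if (i ≠ Fin.last n ∧ j ≠ Fin.last n) ∨ (i = Fin.last n ∧ j = Fin.last n)
          then 1 else sgn (x (Fin.last n))) *
        g (Function.update x (Fin.last n) |x (Fin.last n)|) i j) :=
  stmt0_general n g K hLip hsymm hbdry
end

section
/- Let f : ℝⁿ → ℝ be smooth (C^∞). If every zero of f has finite order (i.e., at each zero some partial derivative of some order is nonzero), then the zero set {x : f(x) = 0} has Hausdorff dimension at most n − 1. -/
open MeasureTheory Set Module

lemma lemA {n : ℕ} (g : EuclideanSpace ℝ (Fin n) → ℝ) (hg : ContDiff ℝ (⊤ : ℕ∞) g)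
    (a : EuclideanSpace ℝ (Fin n)) (ha0 : g a = 0) (ha1 : fderiv ℝ g a ≠ 0) :
    ∃ U ∈ nhds a, dimH ({x | g x = 0} ∩ U) ≤ ((n - 1 : ℕ) : ENNReal) := by
  set f' := fderiv ℝ g a with hf'def
  have hf : HasStrictFDerivAt g f' a := hg.hasStrictFDerivAt (by simp)
  have hsurj : f'.range = ⊤ := by
    obtain ⟨u, hu⟩ : ∃ u, f' u ≠ 0 := by
      by_contra h
      push_neg at h
      exact ha1 (ContinuousLinearMap.ext fun u => by simp [h u])
    rw [LinearMap.range_eq_top]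
    intro c
    exact ⟨(c / f' u) • u, by simp [div_mul_cancel₀ _ hu]⟩
  have hsurj' : LinearMap.range (f' : EuclideanSpace ℝ (Fin n) →ₗ[ℝ] ℝ) = ⊤ := by
    rw [LinearMap.range_eq_top]
    exact LinearMap.range_eq_top.1 hsurj
  have hker : finrank ℝ (f'.ker) = n - 1 := by
    have h1 := f'.toLinearMap.finrank_range_add_finrank_ker
    rw [hsurj'] at h1
    have hkk : LinearMap.ker (f' : EuclideanSpace ℝ (Fin n) →ₗ[ℝ] ℝ) = f'.ker := rfl
    rw [hkk] at h1
    simp only [finrank_top, finrank_self] at h1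
    have h2 : finrank ℝ (EuclideanSpace ℝ (Fin n)) = n := finrank_euclideanSpace_fin
    omega
  set φ := hf.implicitToOpenPartialHomeomorph g f' hsurj with hφ
  have hstrict : HasStrictFDerivAt (hf.implicitFunction g f' hsurj 0)
      (f'.ker).subtypeL 0 := by
    have := hf.to_implicitFunction hsurj
    rwa [ha0] at this
  obtain ⟨K, t, ht, hlip⟩ := hstrict.exists_lipschitzOnWith
  have h1 : ∀ᶠ x in nhds a,
      hf.implicitFunction g f' hsurj (g x) (φ x).2 = x := hf.eq_implicitFunction hsurj
  have h2 : ∀ᶠ x in nhds a, (φ x).2 ∈ t := by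
    have hc : ContinuousAt φ a := φ.continuousAt (hf.mem_implicitToOpenPartialHomeomorph_source hsurj)
    have hsnd : ContinuousAt (fun x => (φ x).2) a := hc.snd
    have : Filter.Tendsto (fun x => (φ x).2) (nhds a) (nhds 0) := by
      have hφa : φ a = (g a, 0) := hf.implicitToOpenPartialHomeomorph_self hsurj
      simpa [hφa] using hsnd.tendsto
    exact this.eventually_mem ht
  refine ⟨{x | (hf.implicitFunction g f' hsurj (g x) (φ x).2 = x ∧ (φ x).2 ∈ t)},
    h1.and h2, ?_⟩
  have hsub : {x | g x = 0} ∩ {x | (hf.implicitFunction g f' hsurj (g x) (φ x).2 = x ∧ (φ x).2 ∈ t)}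
      ⊆ (hf.implicitFunction g f' hsurj 0) '' t := by
    rintro x ⟨hx0, hx1, hx2⟩
    refine ⟨(φ x).2, hx2, ?_⟩
    rw [show g x = 0 from hx0] at hx1
    exact hx1
  calc dimH _ ≤ dimH ((hf.implicitFunction g f' hsurj 0) '' t) := dimH_mono hsub
    _ ≤ dimH t := hlip.dimH_image_le
    _ ≤ dimH (univ : Set (f'.ker)) := dimH_mono (subset_univ _)
    _ = finrank ℝ (f'.ker) := Real.dimH_univ_eq_finrank _
    _ = ((n - 1 : ℕ) : ENNReal) := by rw [hker]

/-- if `f : ℝⁿ → ℝ` is `C^∞` and every zero of `f` has finite order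
(some iterated partial derivative is nonzero there), then the zero set of `f` has
Hausdorff dimension at most `n − 1`. -/
theorem stmt8 (n : ℕ) (f : EuclideanSpace ℝ (Fin n) → ℝ)
    (hf : ContDiff ℝ (⊤ : ℕ∞) f)
    (hfin : ∀ p : EuclideanSpace ℝ (Fin n), f p = 0 →
      ∃ (m : ℕ) (v : Fin m → Fin n),
        iteratedFDeriv ℝ m f p (fun j => EuclideanSpace.single (v j) (1 : ℝ)) ≠ 0) :
    dimH {x : EuclideanSpace ℝ (Fin n) | f x = 0} ≤ (n - 1 : ℕ) := by
  classical
  set G : ∀ (k : ℕ), (Fin (k + 1) → Fin n) → EuclideanSpace ℝ (Fin n) → ℝ :=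
    fun k v x => iteratedFDeriv ℝ k f x fun j => EuclideanSpace.single (v j.succ) (1 : ℝ)
    with hGdef
  set T : ∀ (k : ℕ), (Fin (k + 1) → Fin n) → Set (EuclideanSpace ℝ (Fin n)) :=
    fun k v => {x | G k v x = 0 ∧ fderiv ℝ (G k v) x ≠ 0} with hTdef
  have hsm : ∀ k, ContDiff ℝ (⊤ : ℕ∞) (iteratedFDeriv ℝ k f) := fun k =>
    hf.iteratedFDeriv_right (by exact_mod_cast (le_top : ((⊤ : ℕ∞) + k) ≤ ⊤))
  have hG : ∀ k (v : Fin (k + 1) → Fin n), ContDiff ℝ (⊤ : ℕ∞) (G k v) := fun k v =>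
    (ContinuousMultilinearMap.apply ℝ (fun _ : Fin k => EuclideanSpace ℝ (Fin n)) ℝ
      (fun j => EuclideanSpace.single (v j.succ) (1 : ℝ))).contDiff.comp (hsm k)
  have hD : ∀ k (v : Fin (k + 1) → Fin n) (x : EuclideanSpace ℝ (Fin n)),
      fderiv ℝ (G k v) x (EuclideanSpace.single (v 0) (1 : ℝ)) =
        iteratedFDeriv ℝ (k + 1) f x fun j => EuclideanSpace.single (v j) (1 : ℝ) := by
    intro k v x
    have hdf : HasFDerivAt (iteratedFDeriv ℝ k f)
        (fderiv ℝ (iteratedFDeriv ℝ k f) x) x :=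
      ((hsm k).differentiable (by simp) x).hasFDerivAt
    have hcomp : HasFDerivAt (G k v)
        ((ContinuousMultilinearMap.apply ℝ (fun _ : Fin k => EuclideanSpace ℝ (Fin n)) ℝ
          (fun j => EuclideanSpace.single (v j.succ) (1 : ℝ))).comp
          (fderiv ℝ (iteratedFDeriv ℝ k f) x)) x :=
      ((ContinuousMultilinearMap.apply ℝ (fun _ : Fin k => EuclideanSpace ℝ (Fin n)) ℝ
          (fun j => EuclideanSpace.single (v j.succ) (1 : ℝ))).hasFDerivAt).comp x hdf
    rw [hcomp.fderiv]
    rw [iteratedFDeriv_succ_apply_left]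
    rfl
  have hcover : {x : EuclideanSpace ℝ (Fin n) | f x = 0} ⊆ ⋃ (k : ℕ), ⋃ (v : Fin (k + 1) → Fin n), T k v := by
    intro p hp
    have hex : ∃ m, ∃ v : Fin m → Fin n,
        iteratedFDeriv ℝ m f p (fun j => EuclideanSpace.single (v j) (1 : ℝ)) ≠ 0 := hfin p hp
    have hm₀ := Nat.find_spec hex
    have hmin := fun k (hk : k < Nat.find hex) => Nat.find_min hex hk
    have hne : Nat.find hex ≠ 0 := by
      intro h0
      rw [h0] at hm₀
      obtain ⟨v, hv⟩ := hm₀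
      exact hv (by rw [iteratedFDeriv_zero_apply]; exact hp)
    obtain ⟨k, hk⟩ : ∃ k, Nat.find hex = k + 1 := ⟨Nat.find hex - 1, by omega⟩
    rw [hk] at hm₀
    obtain ⟨v, hv⟩ := hm₀
    refine Set.mem_iUnion.2 ⟨k, Set.mem_iUnion.2 ⟨v, ?_, ?_⟩⟩
    · have := hmin k (by omega)
      push_neg at this
      exact this fun j => v j.succ
    · intro h0
      apply hv
      rw [← hD k v p, h0]
      rfl
  have hT : ∀ k (v : Fin (k + 1) → Fin n), dimH (T k v) ≤ ((n - 1 : ℕ) : ENNReal) := by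
    intro k v
    by_contra h
    push_neg at h
    obtain ⟨x, hxT, hx⟩ := exists_mem_nhdsWithin_lt_dimH_of_lt_dimH h
    obtain ⟨U, hU, hUd⟩ := lemA (G k v) (hG k v) x hxT.1 hxT.2
    have hmem : T k v ∩ U ∈ nhdsWithin x (T k v) :=
      Filter.inter_mem self_mem_nhdsWithin (mem_nhdsWithin_of_mem_nhds hU)
    have hlt := hx _ hmem
    have hle : dimH (T k v ∩ U) ≤ ((n - 1 : ℕ) : ENNReal) :=
      le_trans (dimH_mono (Set.inter_subset_inter_left U fun y hy => hy.1)) hUd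
    exact absurd hle (not_le.2 hlt)
  calc dimH {x : EuclideanSpace ℝ (Fin n) | f x = 0} ≤ dimH (⋃ (k : ℕ), ⋃ (v : Fin (k + 1) → Fin n), T k v) :=
        dimH_mono hcover
    _ ≤ ((n - 1 : ℕ) : ENNReal) := by
        rw [dimH_iUnion]
        refine iSup_le fun k => ?_
        rw [dimH_iUnion]
        exact iSup_le fun v => hT k v
end

section
/- Let g be a Riemannian metric on an open set of ℝⁿ and g̃ = DgD with D = diag(1,…,1,−1) (flipping signs of the mixed last-index entries). For the Hodge star operators ⋆ and ⋆̃ associated to g and g̃ with the standard orientation, and a k-form ω with reflected form ω̃ obtained by multiplying components containing the index n by −1, one has (⋆̃ω̃)_{i₁…i_{n−k}} = (⋆ω)_{i₁…i_{n−k}} if some index equals n, and (⋆̃ω̃)_{i₁…i_{n−k}} = −(⋆ω)_{i₁…i_{n−k}} if no index equals n. -/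
/-- The Levi-Civita symbol `ε_{v 0 … v (N−1)}`: the sign of `v` if `v` is a
permutation of the indices, and `0` otherwise. -/
noncomputable def levi (N : ℕ) (v : Fin N → Fin N) : ℝ :=
  if h : Function.Bijective v then (Equiv.Perm.sign (Equiv.ofBijective v h) : ℤ) else 0

/-- The components of the Hodge star of a `k`-form `ω` (given by its components on all
`k`-tuples of indices) in dimension `n = k + m` with respect to the symmetric positive
definite matrix `g`: `(⋆ω)_J = (√det g / k!) Σ_{I,L} ω_I (Π_l g^{I_l L_l}) ε_{L J}`,
where `g^{ij}` are the entries of `g⁻¹` and `ε` is the Levi-Civita symbol. -/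
noncomputable def hodgeComp (k m : ℕ) (g : Matrix (Fin (k + m)) (Fin (k + m)) ℝ)
    (ω : (Fin k → Fin (k + m)) → ℝ) (J : Fin m → Fin (k + m)) : ℝ :=
  (Real.sqrt g.det / (k.factorial : ℝ)) *
    ∑ I : Fin k → Fin (k + m), ∑ L : Fin k → Fin (k + m),
      ω I * (∏ l : Fin k, g⁻¹ (I l) (L l)) * levi (k + m) (Fin.append L J)

/-!
Since `D` is an involution, `(DgD)⁻¹ = D g⁻¹ D` and `det (DgD) = det g`. In each term
`ω̃_I (Π_l g̃^{I_l L_l}) ε_{LJ}` the signs coming from `D` on the indices of `I` cancel the sign of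
`ω̃_I` (only injective `I` matter, as `ω` is alternating), while those on the indices of `L`
multiply to `-1` exactly when `n` occurs in `L`. When `ε_{LJ} ≠ 0`, `(L, J)` is a permutation of
all indices, so `n` occurs in `L` if and only if it does not occur in `J`.
-/

open Function

namespace Matrix

variable {n R : Type*} [Fintype n] [DecidableEq n] [CommRing R] {d : n → R}

lemma diagonal_mul_self_of_mul_self_eq_one (hd : ∀ i, d i * d i = 1) :
    diagonal d * diagonal d = 1 := by
  simp [diagonal_mul_diagonal, hd]

lemma det_diagonal_mul_mul_diagonal (hd : ∀ i, d i * d i = 1) (A : Matrix n n R) :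
    (diagonal d * A * diagonal d).det = A.det := by
  rw [det_mul, det_mul, mul_comm, ← mul_assoc, ← det_mul,
    diagonal_mul_self_of_mul_self_eq_one hd, det_one, one_mul]

lemma inv_diagonal_mul_mul_diagonal_apply (hd : ∀ i, d i * d i = 1) (A : Matrix n n R)
    (i j : n) : (diagonal d * A * diagonal d)⁻¹ i j = d i * A⁻¹ i j * d j := by
  have hinv : (diagonal d)⁻¹ = diagonal d :=
    inv_eq_right_inv (diagonal_mul_self_of_mul_self_eq_one hd)
  rw [mul_inv_rev, mul_inv_rev, hinv, ← mul_assoc, mul_diagonal, diagonal_mul]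

end Matrix

section Reflection

variable {α : Type*} [DecidableEq α] (x : α)

def reflSign (i : α) : ℝ := if i = x then -1 else 1

lemma reflSign_mul_self (i : α) : reflSign x i * reflSign x i = 1 := by
  unfold reflSign; split_ifs <;> norm_num

lemma prod_reflSign_of_injective {ι : Type*} [Fintype ι] {I : ι → α} (hI : Injective I) :
    ∏ l, reflSign x (I l) = if ∃ l, I l = x then -1 else 1 := by
  split_ifs with h
  · obtain ⟨l₀, rfl⟩ := h
    rw [Finset.prod_eq_single l₀]
    · exact if_pos rfl
    · exact fun l _ hl => if_neg (hI.ne hl)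
    · simp
  · exact Finset.prod_eq_one fun l _ => if_neg fun hl => h ⟨l, hl⟩

end Reflection

lemma exists_append_left_iff_not_exists_right {k m : ℕ} {α : Type*}
    {L : Fin k → α} {J : Fin m → α} (h : Bijective (Fin.append L J)) (x : α) :
    (∃ l, L l = x) ↔ ¬ ∃ j, J j = x := by
  constructor
  · rintro ⟨l, rfl⟩ ⟨j, hj⟩
    exact (Fin.append_injective_iff.1 h.1).2.2 l j hj.symm
  · intro hJ
    obtain ⟨y, hy⟩ := h.2 x
    induction y using Fin.addCases with
    | left l => exact ⟨l, by simpa using hy⟩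
    | right j => exact absurd ⟨j, by simpa using hy⟩ hJ

lemma alternating_eq_zero_of_not_injective {k : ℕ} {α : Type*} {ω : (Fin k → α) → ℝ}
    (halt : ∀ (I : Fin k → α) (σ : Equiv.Perm (Fin k)),
      ω (I ∘ σ) = ((Equiv.Perm.sign σ : ℤ) : ℝ) * ω I)
    {I : Fin k → α} (hI : ¬ Injective I) : ω I = 0 := by
  obtain ⟨i, j, hIij, hij⟩ : ∃ i j, I i = I j ∧ i ≠ j := by
    simpa [Injective] using hI
  have h := halt I (Equiv.swap i j)
  have hswap : I ∘ Equiv.swap i j = I := by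
    ext l; simp only [comp_apply, Equiv.swap_apply_def]; split_ifs <;> simp_all
  rw [hswap, Equiv.Perm.sign_swap hij] at h
  push_cast at h
  linarith

lemma reflected_hodgeComp_summand {k m : ℕ} (x : Fin (k + m))
    (g : Matrix (Fin (k + m)) (Fin (k + m)) ℝ) {ω : (Fin k → Fin (k + m)) → ℝ}
    (halt : ∀ (I : Fin k → Fin (k + m)) (σ : Equiv.Perm (Fin k)),
      ω (I ∘ σ) = ((Equiv.Perm.sign σ : ℤ) : ℝ) * ω I)
    (J : Fin m → Fin (k + m)) (I L : Fin k → Fin (k + m)) :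
    ((if ∃ l, I l = x then -1 else 1) * ω I) *
        (∏ l, (Matrix.diagonal (reflSign x) * g * Matrix.diagonal (reflSign x))⁻¹ (I l) (L l)) *
        levi (k + m) (Fin.append L J) =
      (if ∃ j, J j = x then 1 else -1) *
        (ω I * (∏ l, g⁻¹ (I l) (L l)) * levi (k + m) (Fin.append L J)) := by
  by_cases hI : Injective I
  swap
  · simp [alternating_eq_zero_of_not_injective halt hI]
  by_cases hLJ : Bijective (Fin.append L J)
  swap
  · simp only [levi, dif_neg hLJ, mul_zero]
  have hL : Injective L := (Fin.append_injective_iff.1 hLJ.1).1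
  simp only [Matrix.inv_diagonal_mul_mul_diagonal_apply (reflSign_mul_self x),
    Finset.prod_mul_distrib, prod_reflSign_of_injective x hI, prod_reflSign_of_injective x hL,
    exists_append_left_iff_not_exists_right hLJ]
  split_ifs <;> ring

theorem stmt15_general (k m : ℕ) (g : Matrix (Fin (k + m + 1)) (Fin (k + m + 1)) ℝ)
    (D : Matrix (Fin (k + m + 1)) (Fin (k + m + 1)) ℝ)
    (hD : D = Matrix.diagonal fun i => if i = Fin.last (k + m) then (-1 : ℝ) else 1)
    (ω : (Fin k → Fin (k + m + 1)) → ℝ)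
    (halt : ∀ (I : Fin k → Fin (k + m + 1)) (σ : Equiv.Perm (Fin k)),
      ω (I ∘ σ) = ((Equiv.Perm.sign σ : ℤ) : ℝ) * ω I) :
    ∀ J : Fin (m + 1) → Fin (k + m + 1),
      hodgeComp k (m + 1) (D * g * D)
        (fun I => (if ∃ l, I l = Fin.last (k + m) then (-1 : ℝ) else 1) * ω I) J =
      (if ∃ l, J l = Fin.last (k + m) then (1 : ℝ) else -1) * hodgeComp k (m + 1) g ω J := by
  intro J
  obtain rfl : D = Matrix.diagonal (reflSign (Fin.last (k + m))) := hD
  simp only [hodgeComp, Matrix.det_diagonal_mul_mul_diagonal (reflSign_mul_self _), Finset.mul_sum]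
  refine Finset.sum_congr rfl fun I _ => Finset.sum_congr rfl fun L _ => ?_
  rw [reflected_hodgeComp_summand (m := m + 1) _ g halt]
  ring

/-- pointwise identity, in dimension `n = k + (m+1)`, for the Hodge star
operators `⋆` and `⋆̃` of `g` and `g̃ = D g D`, `D = diag(1,…,1,−1)` (standard
orientation), applied to an (alternating) `k`-form `ω` and its reflection `ω̃`
(components containing the index `n` multiplied by `−1`): `(⋆̃ω̃)_J = (⋆ω)_J` if some
index of `J` equals `n`, and `(⋆̃ω̃)_J = −(⋆ω)_J` if no index of `J` equals `n`. -/
theorem stmt15 (k m : ℕ) (g : Matrix (Fin (k + m + 1)) (Fin (k + m + 1)) ℝ)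
    (hpos : g.PosDef)
    (D : Matrix (Fin (k + m + 1)) (Fin (k + m + 1)) ℝ)
    (hD : D = Matrix.diagonal fun i => if i = Fin.last (k + m) then (-1 : ℝ) else 1)
    (ω : (Fin k → Fin (k + m + 1)) → ℝ)
    (halt : ∀ (I : Fin k → Fin (k + m + 1)) (σ : Equiv.Perm (Fin k)),
      ω (I ∘ σ) = ((Equiv.Perm.sign σ : ℤ) : ℝ) * ω I) :
    ∀ J : Fin (m + 1) → Fin (k + m + 1),
      hodgeComp k (m + 1) (D * g * D)
        (fun I => (if ∃ l, I l = Fin.last (k + m) then (-1 : ℝ) else 1) * ω I) J =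
      (if ∃ l, J l = Fin.last (k + m) then (1 : ℝ) else -1) * hodgeComp k (m + 1) g ω J :=
  stmt15_general k m g D hD ω halt
end
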